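/- Let C ⊆ R^p be a nonempty closed convex cone with polar C*. Then w(C ∩ S^{p−1})² + w(C* ∩ S^{p−1})² ≤ p, where w denotes Gaussian width. -/

import Mathlib

open MeasureTheory ProbabilityTheory Real

/-- The standard Gaussian measure on `ℝ^p`. -/
noncomputable def stdGaussian (p : ℕ) : Measure (EuclideanSpace ℝ (Fin p)) :=
  (Measure.pi fun _ : Fin p => gaussianReal 0 1).map
    ⇑(EuclideanSpace.equiv (Fin p) ℝ).symm

/-- The Gaussian width `w(S) = E[sup_{z ∈ S} ⟨g, z⟩]` of a set `S ⊆ ℝ^p`. -/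
noncomputable def gaussianWidth {p : ℕ} (S : Set (EuclideanSpace ℝ (Fin p))) : ℝ :=
  ∫ g, sSup ((fun z => (inner ℝ g z : ℝ)) '' S) ∂(stdGaussian p)

/-- The polar cone `C* = {x : ⟨x, z⟩ ≤ 0 for all z ∈ C}`. -/
def polarCone {p : ℕ} (C : Set (EuclideanSpace ℝ (Fin p))) :
    Set (EuclideanSpace ℝ (Fin p)) :=
  {x | ∀ z ∈ C, (inner ℝ x z : ℝ) ≤ 0}


/-!
For a Gaussian vector `g`, Moreau's decomposition writes `g` as the sum of two orthogonal
vectors, its projection onto `C` and one in `C*`, so `dist(g, C*)² + dist(g, C)² ≤ ‖g‖²`,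
whose mean is `p`. For a unit `z ∈ C` and any `y ∈ C*`, `⟨g, z⟩ ≤ ⟨g - y, z⟩ ≤ ‖g - y‖`, so the
supremum defining `w(C ∩ S^{p-1})` is at most `dist(g, C*)`; Jensen then bounds the squared width
by `E[dist(g, C*)²]`, and symmetrically for `C*`. The width is nonnegative, since it dominates
`E⟨g, z₀⟩ = 0`.
-/

open scoped RealInnerProductSpace
open Metric Module

lemma sq_integral_le_integral_sq {α : Type*} [MeasurableSpace α] {μ : Measure α}
    [IsProbabilityMeasure μ] {f : α → ℝ} (hf : MemLp f 2 μ) :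
    (∫ x, f x ∂μ) ^ 2 ≤ ∫ x, f x ^ 2 ∂μ := by
  have := variance_nonneg f μ
  rw [variance_eq_sub hf] at this
  simpa [sub_nonneg] using this

lemma sq_integral_le_sq_integral_of_le {α : Type*} [MeasurableSpace α] {μ : Measure α}
    {h f D : α → ℝ} (hh : Integrable h μ) (hD : Integrable D μ) (hh0 : ∫ x, h x ∂μ = 0)
    (hhf : h ≤ f) (hfD : f ≤ D) :
    (∫ x, f x ∂μ) ^ 2 ≤ (∫ x, D x ∂μ) ^ 2 := by
  by_cases hf : Integrable f μ
  · have hf0 : 0 ≤ ∫ x, f x ∂μ := hh0 ▸ integral_mono hh hf hhf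
    exact pow_le_pow_left₀ hf0 (integral_mono hf hD hfD) 2
  · rw [integral_undef hf, zero_pow two_ne_zero]
    positivity

lemma inner_le_infDist_of_inner_nonpos {E : Type*} [NormedAddCommGroup E] [InnerProductSpace ℝ E]
    {T : Set E} {z : E} (hT : T.Nonempty) (hz : ‖z‖ ≤ 1) (hTz : ∀ y ∈ T, ⟪y, z⟫ ≤ 0) (g : E) :
    ⟪g, z⟫ ≤ infDist g T := by
  refine (le_infDist hT).2 fun y hy => ?_
  calc ⟪g, z⟫ = ⟪g - y, z⟫ + ⟪y, z⟫ := by rw [inner_sub_left]; ring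
    _ ≤ ‖g - y‖ * ‖z‖ + 0 := add_le_add (real_inner_le_norm _ _) (hTz y hy)
    _ ≤ dist g y := by
      rw [dist_eq_norm, add_zero]
      exact mul_le_of_le_one_right (norm_nonneg _) hz

section StdGaussian

variable {E : Type*} [NormedAddCommGroup E] [InnerProductSpace ℝ E] [FiniteDimensional ℝ E]
  [MeasurableSpace E] [BorelSpace E]

lemma integral_inner_stdGaussian (z : E) : ∫ x, ⟪x, z⟫ ∂stdGaussian E = 0 := by
  simpa [real_inner_comm] using integral_strongDual_stdGaussian (innerSL ℝ z)

lemma integral_inner_sq_stdGaussian (z : E) : ∫ x, ⟪z, x⟫ ^ 2 ∂stdGaussian E = ‖z‖ ^ 2 := by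
  have := variance_dual_stdGaussian (innerSL ℝ z)
  rw [variance_eq_integral (by fun_prop), integral_strongDual_stdGaussian] at this
  simpa using this

lemma integral_norm_sq_stdGaussian : ∫ x, ‖x‖ ^ 2 ∂stdGaussian E = finrank ℝ E := by
  let b := stdOrthonormalBasis ℝ E
  simp_rw [← b.sum_sq_inner_right]
  rw [integral_finsetSum _ fun i _ => ?_]
  · simp [integral_inner_sq_stdGaussian, b.orthonormal.1]
  · exact (IsGaussian.memLp_dual _ (innerSL ℝ (b i)) 2 (by simp)).integrable_sq

lemma memLp_infDist_stdGaussian {T : Set E} (hT : 0 ∈ T) :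
    MemLp (infDist · T) 2 (stdGaussian E) :=
  IsGaussian.memLp_two_id.of_le (continuous_infDist_pt T).aestronglyMeasurable <|
    ae_of_all _ fun g => by
      simpa [abs_of_nonneg infDist_nonneg] using infDist_le_dist_of_mem (x := g) hT

lemma sq_integral_sSup_inner_le {S : Set E} {D : E → ℝ} (hD : MemLp D 2 (stdGaussian E))
    (hSD : ∀ g, ∀ z ∈ S, ⟪g, z⟫ ≤ D g) :
    (∫ g, sSup ((fun z => ⟪g, z⟫) '' S) ∂stdGaussian E) ^ 2 ≤ ∫ g, D g ^ 2 ∂stdGaussian E := by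
  rcases S.eq_empty_or_nonempty with rfl | ⟨z₀, hz₀⟩
  · simpa using integral_nonneg fun g => sq_nonneg (D g)
  have hbdd (g : E) : BddAbove ((fun z => ⟪g, z⟫) '' S) :=
    ⟨D g, Set.forall_mem_image.2 (hSD g)⟩
  calc _ ≤ (∫ g, D g ∂stdGaussian E) ^ 2 :=
        sq_integral_le_sq_integral_of_le (h := fun g => ⟪g, z₀⟫)
          (IsGaussian.integrable_id.inner_const z₀) (hD.integrable one_le_two)
          (integral_inner_stdGaussian z₀)
          (fun g => le_csSup (hbdd g) ⟨z₀, hz₀, rfl⟩)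
          (fun g => csSup_le ⟨_, z₀, hz₀, rfl⟩ (Set.forall_mem_image.2 (hSD g)))
    _ ≤ ∫ g, D g ^ 2 ∂stdGaussian E := sq_integral_le_integral_sq hD

end StdGaussian

lemma stdGaussian_eq_stdGaussian_euclideanSpace (p : ℕ) :
    _root_.stdGaussian p = ProbabilityTheory.stdGaussian (EuclideanSpace ℝ (Fin p)) := by
  rw [← map_pi_eq_stdGaussian]
  rfl

section PolarCone

variable {p : ℕ} {C : Set (EuclideanSpace ℝ (Fin p))}

lemma zero_mem_polarCone (C : Set (EuclideanSpace ℝ (Fin p))) : 0 ∈ polarCone C :=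
  fun _ _ => by simp

lemma zero_mem_of_nonempty_of_smul_mem (hne : C.Nonempty)
    (hcone : ∀ (t : ℝ), 0 ≤ t → ∀ x ∈ C, t • x ∈ C) : 0 ∈ C := by
  obtain ⟨x, hx⟩ := hne
  simpa using hcone 0 le_rfl x hx

variable (hne : C.Nonempty) (hconv : Convex ℝ C) (hclosed : IsClosed C)
  (hcone : ∀ (t : ℝ), 0 ≤ t → ∀ x ∈ C, t • x ∈ C)
include hne hconv hclosed hcone

/-- Moreau decomposition, with `v` the metric projection of `g` onto `C`. -/
lemma exists_mem_sub_mem_polarCone_inner_eq_zero (g : EuclideanSpace ℝ (Fin p)) :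
    ∃ v ∈ C, g - v ∈ polarCone C ∧ ⟪v, g - v⟫ = 0 := by
  obtain ⟨v, hvC, hv⟩ := exists_norm_eq_iInf_of_complete_convex hne hclosed.isComplete hconv g
  have hproj := (norm_eq_iInf_iff_real_inner_le_zero hconv hvC).1 hv
  -- testing the variational inequality at `0` and `2 • v` gives orthogonality
  have h0 := hproj 0 (zero_mem_of_nonempty_of_smul_mem hne hcone)
  have h2 := hproj (2 • v) (hcone 2 zero_le_two v hvC)
  rw [zero_sub, inner_neg_right] at h0
  rw [two_smul, add_sub_cancel_right] at h2
  have horth : ⟪g - v, v⟫ = 0 := le_antisymm h2 (neg_nonpos.1 h0)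
  refine ⟨v, hvC, fun z hz => ?_, by rwa [real_inner_comm]⟩
  simpa [inner_sub_right, horth] using hproj z hz

lemma infDist_polarCone_sq_add_infDist_sq_le (g : EuclideanSpace ℝ (Fin p)) :
    infDist g (polarCone C) ^ 2 + infDist g C ^ 2 ≤ ‖g‖ ^ 2 := by
  obtain ⟨v, hvC, hpolar, horth⟩ :=
    exists_mem_sub_mem_polarCone_inner_eq_zero hne hconv hclosed hcone g
  have hP : infDist g (polarCone C) ≤ ‖v‖ := by
    simpa [dist_eq_norm] using infDist_le_dist_of_mem (x := g) hpolar
  have hC : infDist g C ≤ ‖g - v‖ := by simpa [dist_eq_norm] using infDist_le_dist_of_mem hvC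
  calc infDist g (polarCone C) ^ 2 + infDist g C ^ 2 ≤ ‖v‖ ^ 2 + ‖g - v‖ ^ 2 := by
        gcongr <;> exact infDist_nonneg
    _ = ‖g‖ ^ 2 := by
      rw [sq, sq, ← norm_add_sq_eq_norm_sq_add_norm_sq_real horth, add_sub_cancel, sq]

end PolarCone

/-- For a nonempty closed convex cone `C ⊆ ℝ^p` with polar `C*`,
`w(C ∩ S^{p-1})² + w(C* ∩ S^{p-1})² ≤ p`. -/
theorem gaussianWidth_sq_add_polar_sq_le {p : ℕ}
    (C : Set (EuclideanSpace ℝ (Fin p)))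
    (hne : C.Nonempty) (hconv : Convex ℝ C) (hclosed : IsClosed C)
    (hcone : ∀ (t : ℝ), 0 ≤ t → ∀ x ∈ C, t • x ∈ C) :
    gaussianWidth (C ∩ Metric.sphere 0 1) ^ 2 +
      gaussianWidth (polarCone C ∩ Metric.sphere 0 1) ^ 2 ≤ p := by
  set μ := ProbabilityTheory.stdGaussian (EuclideanSpace ℝ (Fin p))
  have hdist_P := memLp_infDist_stdGaussian (zero_mem_polarCone C)
  have hdist_C := memLp_infDist_stdGaussian (zero_mem_of_nonempty_of_smul_mem hne hcone)
  have hsphere {z : EuclideanSpace ℝ (Fin p)} (hz : z ∈ sphere 0 1) : ‖z‖ ≤ 1 :=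
    (mem_sphere_zero_iff_norm.1 hz).le
  have hwidth_C := sq_integral_sSup_inner_le (S := C ∩ sphere 0 1) hdist_P
    fun g z hz => inner_le_infDist_of_inner_nonpos ⟨0, zero_mem_polarCone C⟩ (hsphere hz.2)
      (fun y hy => hy z hz.1) g
  have hwidth_P := sq_integral_sSup_inner_le (S := polarCone C ∩ sphere 0 1) hdist_C
    fun g z hz => inner_le_infDist_of_inner_nonpos hne (hsphere hz.2)
      (fun y hy => real_inner_comm y z ▸ hz.1 y hy) g
  rw [gaussianWidth, gaussianWidth, stdGaussian_eq_stdGaussian_euclideanSpace]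
  calc _ ≤ ∫ g, infDist g (polarCone C) ^ 2 ∂μ + ∫ g, infDist g C ^ 2 ∂μ :=
        add_le_add hwidth_C hwidth_P
    _ = ∫ g, (infDist g (polarCone C) ^ 2 + infDist g C ^ 2) ∂μ :=
      (integral_add hdist_P.integrable_sq hdist_C.integrable_sq).symm
    _ ≤ ∫ g, ‖g‖ ^ 2 ∂μ :=
      integral_mono (hdist_P.integrable_sq.add hdist_C.integrable_sq)
        IsGaussian.memLp_two_id.integrable_norm_pow'
        (infDist_polarCone_sq_add_infDist_sq_le hne hconv hclosed hcone)
    _ = p := by rw [integral_norm_sq_stdGaussian, finrank_euclideanSpace_fin]
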